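/- Secant-squared stationary radial solution: Let β ≠ 0 and C₄, C₅ be real constants and F : ℝ → ℝ any differentiable function. Write r = √(x²+y²). Then the time-independent functions u = 6β²·sec²(βr), v = 2β²·(3sec²(βr) − 2), w = C₄ + C₅·r − 6β²·sec²(βr) satisfy system (3-1) with d₁ = d₂ = d₃ = 1 and α = −1 at every point (t,x,y) with (x,y) ≠ (0,0) and cos(β·√(x²+y²)) ≠ 0. -/

import Mathlib

/-- Partial derivative with respect to `t` of a function of `(t,x,y)`. -/
noncomputable def pdT (f : ℝ × ℝ × ℝ → ℝ) (p : ℝ × ℝ × ℝ) : ℝ := fderiv ℝ f p (1, 0, 0)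
/-- Partial derivative with respect to `x`. -/
noncomputable def pdX (f : ℝ × ℝ × ℝ → ℝ) (p : ℝ × ℝ × ℝ) : ℝ := fderiv ℝ f p (0, 1, 0)
/-- Partial derivative with respect to `y`. -/
noncomputable def pdY (f : ℝ × ℝ × ℝ → ℝ) (p : ℝ × ℝ × ℝ) : ℝ := fderiv ℝ f p (0, 0, 1)

/-- `(u,v,w)` solves system (3-1), the convective Lotka–Volterra system (`k = 1`)
whose stream function is `Ψ = F(x²+y²) + α·arctan(x/y)`; here `F'` denotes the
derivative of `F`. -/
def Solves31 (α d₁ d₂ d₃ : ℝ) (F' : ℝ → ℝ) (u v w : ℝ × ℝ × ℝ → ℝ)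
    (Ω : Set (ℝ × ℝ × ℝ)) : Prop :=
  ∀ p ∈ Ω,
    (pdT u p - α * (p.2.1 * pdX u p + p.2.2 * pdY u p) / (p.2.1 ^ 2 + p.2.2 ^ 2)
        + 2 * F' (p.2.1 ^ 2 + p.2.2 ^ 2) * (p.2.1 * pdY u p - p.2.2 * pdX u p)
      = d₁ * (pdX (pdX u) p + pdY (pdY u) p) - u p * v p) ∧
    (pdT v p - α * (p.2.1 * pdX v p + p.2.2 * pdY v p) / (p.2.1 ^ 2 + p.2.2 ^ 2)
        + 2 * F' (p.2.1 ^ 2 + p.2.2 ^ 2) * (p.2.1 * pdY v p - p.2.2 * pdX v p)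
      = d₂ * (pdX (pdX v) p + pdY (pdY v) p) - u p * v p) ∧
    (pdT w p - α * (p.2.1 * pdX w p + p.2.2 * pdY w p) / (p.2.1 ^ 2 + p.2.2 ^ 2)
        + 2 * F' (p.2.1 ^ 2 + p.2.2 ^ 2) * (p.2.1 * pdY w p - p.2.2 * pdX w p)
      = d₃ * (pdX (pdX w) p + pdY (pdY w) p) + u p * v p)

/-! A stationary radial field `f = g ∘ r` has no time derivative and no rotational part
(`x f_y - y f_x = 0`); its radial part is `(x f_x + y f_y) / r² = g'(r) / r` and its Laplacian is
`g'' + g' / r`. With `α = -1` and unit diffusion the `g' / r` terms cancel, so (3-1) reduces to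
the ODEs `u'' = v'' = u v = -w''`, which hold because `(sec² βr)'' = β² (6 sec⁴ βr - 4 sec² βr)`. -/

open Real Filter Topology

noncomputable def planarRadius (p : ℝ × ℝ × ℝ) : ℝ := √(p.2.1 ^ 2 + p.2.2 ^ 2)

lemma planarRadius_sq (p : ℝ × ℝ × ℝ) : planarRadius p ^ 2 = p.2.1 ^ 2 + p.2.2 ^ 2 :=
  sq_sqrt (by positivity)

lemma planarRadius_pos {p : ℝ × ℝ × ℝ} (hp : p.2 ≠ 0) : 0 < planarRadius p := by
  refine sqrt_pos.2 (lt_of_le_of_ne (by positivity) fun h => hp ?_)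
  have hx : p.2.1 = 0 := by nlinarith [sq_nonneg p.2.1, sq_nonneg p.2.2]
  have hy : p.2.2 = 0 := by nlinarith [sq_nonneg p.2.1, sq_nonneg p.2.2]
  exact Prod.ext hx hy

lemma continuous_planarRadius : Continuous planarRadius := by
  unfold planarRadius; fun_prop

lemma differentiableAt_planarRadius {p : ℝ × ℝ × ℝ} (hp : p.2 ≠ 0) :
    DifferentiableAt ℝ planarRadius p :=
  DifferentiableAt.sqrt (by fun_prop) (sqrt_pos.1 (planarRadius_pos hp)).ne'

lemma fderiv_planarRadius_apply {p : ℝ × ℝ × ℝ} (hp : p.2 ≠ 0) (v : ℝ × ℝ × ℝ) :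
    fderiv ℝ planarRadius p v = (p.2.1 * v.2.1 + p.2.2 * v.2.2) / planarRadius p := by
  have hs := (sqrt_pos.1 (planarRadius_pos hp)).ne'
  have hx : HasFDerivAt (fun q : ℝ × ℝ × ℝ => q.2.1) _ p := (hasFDerivAt_snd (𝕜 := ℝ)).fst
  have hy : HasFDerivAt (fun q : ℝ × ℝ × ℝ => q.2.2) _ p := (hasFDerivAt_snd (𝕜 := ℝ)).snd
  have h : HasFDerivAt planarRadius _ p := ((hx.pow 2).add (hy.pow 2)).sqrt hs
  rw [h.fderiv]
  simp only [planarRadius, Pi.add_apply, Nat.add_one_sub_one, pow_one, nsmul_eq_mul,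
    Nat.cast_ofNat, add_apply, smul_apply, ContinuousLinearMap.comp_apply,
    ContinuousLinearMap.coe_snd', ContinuousLinearMap.coe_fst', smul_eq_mul]
  field_simp

section Radial

variable {h : ℝ → ℝ} {h' : ℝ} {p : ℝ × ℝ × ℝ}

lemma differentiableAt_comp_planarRadius (hp : p.2 ≠ 0) (hh : HasDerivAt h h' (planarRadius p)) :
    DifferentiableAt ℝ (h ∘ planarRadius) p :=
  hh.differentiableAt.comp p (differentiableAt_planarRadius hp)

lemma fderiv_comp_planarRadius_apply (hp : p.2 ≠ 0) (hh : HasDerivAt h h' (planarRadius p))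
    (v : ℝ × ℝ × ℝ) :
    fderiv ℝ (h ∘ planarRadius) p v = h' * (p.2.1 * v.2.1 + p.2.2 * v.2.2) / planarRadius p := by
  rw [(hh.hasFDerivAt.comp p (differentiableAt_planarRadius hp).hasFDerivAt).fderiv]
  rw [ContinuousLinearMap.comp_apply, fderiv_planarRadius_apply hp]
  simp only [ContinuousLinearMap.toSpanSingleton_apply, smul_eq_mul]
  ring

lemma pdT_comp_planarRadius (hp : p.2 ≠ 0) (hh : HasDerivAt h h' (planarRadius p)) :
    pdT (h ∘ planarRadius) p = 0 := by
  simp [pdT, fderiv_comp_planarRadius_apply hp hh]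

lemma pdX_comp_planarRadius (hp : p.2 ≠ 0) (hh : HasDerivAt h h' (planarRadius p)) :
    pdX (h ∘ planarRadius) p = h' * p.2.1 / planarRadius p := by
  simp [pdX, fderiv_comp_planarRadius_apply hp hh]

lemma pdY_comp_planarRadius (hp : p.2 ≠ 0) (hh : HasDerivAt h h' (planarRadius p)) :
    pdY (h ∘ planarRadius) p = h' * p.2.2 / planarRadius p := by
  simp [pdY, fderiv_comp_planarRadius_apply hp hh]

lemma convection_comp_planarRadius (α : ℝ) (F' : ℝ → ℝ) (hp : p.2 ≠ 0)
    (hh : HasDerivAt h h' (planarRadius p)) :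
    pdT (h ∘ planarRadius) p
        - α * (p.2.1 * pdX (h ∘ planarRadius) p + p.2.2 * pdY (h ∘ planarRadius) p)
          / (p.2.1 ^ 2 + p.2.2 ^ 2)
        + 2 * F' (p.2.1 ^ 2 + p.2.2 ^ 2)
          * (p.2.1 * pdY (h ∘ planarRadius) p - p.2.2 * pdX (h ∘ planarRadius) p)
      = -α * h' / planarRadius p := by
  have hr := (planarRadius_pos hp).ne'
  rw [pdT_comp_planarRadius hp hh, pdX_comp_planarRadius hp hh, pdY_comp_planarRadius hp hh,
    ← planarRadius_sq]
  field_simp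
  linear_combination α * h' * planarRadius_sq p

end Radial

lemma laplacian_comp_planarRadius {g g' : ℝ → ℝ} {g'' : ℝ} {p : ℝ × ℝ × ℝ} (hp : p.2 ≠ 0)
    (hg : ∀ᶠ s in 𝓝 (planarRadius p), HasDerivAt g (g' s) s)
    (hg' : HasDerivAt g' g'' (planarRadius p)) :
    pdX (pdX (g ∘ planarRadius)) p + pdY (pdY (g ∘ planarRadius)) p
      = g'' + g' (planarRadius p) / planarRadius p := by
  set r := planarRadius p with hr_def
  have hr : 0 < r := planarRadius_pos hp
  have hk : HasDerivAt (fun s => g' s / s) ((g'' * r - g' r * 1) / r ^ 2) r :=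
    hg'.div (hasDerivAt_id r) hr.ne'
  have hnear : ∀ᶠ q in 𝓝 p, q.2 ≠ 0 ∧ HasDerivAt g (g' (planarRadius q)) (planarRadius q) :=
    (continuous_snd.continuousAt.eventually_ne hp).and
      ((continuous_planarRadius.tendsto p).eventually hg)
  have hX : pdX (g ∘ planarRadius) =ᶠ[𝓝 p]
      fun q => ((fun s => g' s / s) ∘ planarRadius) q * q.2.1 := by
    filter_upwards [hnear] with q ⟨hq, hgq⟩
    rw [pdX_comp_planarRadius hq hgq, Function.comp_apply]
    ring
  have hY : pdY (g ∘ planarRadius) =ᶠ[𝓝 p]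
      fun q => ((fun s => g' s / s) ∘ planarRadius) q * q.2.2 := by
    filter_upwards [hnear] with q ⟨hq, hgq⟩
    rw [pdY_comp_planarRadius hq hgq, Function.comp_apply]
    ring
  have hkd := differentiableAt_comp_planarRadius hp hk
  show fderiv ℝ (pdX (g ∘ planarRadius)) p (0, 1, 0)
    + fderiv ℝ (pdY (g ∘ planarRadius)) p (0, 0, 1) = _
  have hx : HasFDerivAt (fun q : ℝ × ℝ × ℝ => q.2.1) _ p := (hasFDerivAt_snd (𝕜 := ℝ)).fst
  have hy : HasFDerivAt (fun q : ℝ × ℝ × ℝ => q.2.2) _ p := (hasFDerivAt_snd (𝕜 := ℝ)).snd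
  have hXd : HasFDerivAt (fun q => ((fun s => g' s / s) ∘ planarRadius) q * q.2.1) _ p :=
    hkd.hasFDerivAt.mul hx
  have hYd : HasFDerivAt (fun q => ((fun s => g' s / s) ∘ planarRadius) q * q.2.2) _ p :=
    hkd.hasFDerivAt.mul hy
  rw [hX.fderiv_eq, hY.fderiv_eq, hXd.fderiv, hYd.fderiv]
  simp only [add_apply, smul_apply, ContinuousLinearMap.comp_apply, ContinuousLinearMap.coe_snd', ContinuousLinearMap.coe_fst',
    smul_eq_mul, fderiv_comp_planarRadius_apply hp hk, Function.comp_apply, ← hr_def]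
  field_simp
  linear_combination (g' r - r * g'') * planarRadius_sq p

theorem solves31_comp_planarRadius {α d₁ d₂ d₃ : ℝ} (F' : ℝ → ℝ) {R : Set ℝ} (hR : IsOpen R)
    {u v w u' v' w' u'' v'' w'' : ℝ → ℝ}
    (hu : ∀ s ∈ R, HasDerivAt u (u' s) s) (hu' : ∀ s ∈ R, HasDerivAt u' (u'' s) s)
    (hv : ∀ s ∈ R, HasDerivAt v (v' s) s) (hv' : ∀ s ∈ R, HasDerivAt v' (v'' s) s)
    (hw : ∀ s ∈ R, HasDerivAt w (w' s) s) (hw' : ∀ s ∈ R, HasDerivAt w' (w'' s) s)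
    (hode : ∀ s ∈ R, 0 < s →
      -α * u' s / s = d₁ * (u'' s + u' s / s) - u s * v s ∧
      -α * v' s / s = d₂ * (v'' s + v' s / s) - u s * v s ∧
      -α * w' s / s = d₃ * (w'' s + w' s / s) + u s * v s) :
    Solves31 α d₁ d₂ d₃ F' (u ∘ planarRadius) (v ∘ planarRadius) (w ∘ planarRadius)
      {p | p.2 ≠ 0 ∧ planarRadius p ∈ R} := by
  rintro p ⟨hp, hpR⟩
  have hnear : ∀ᶠ s in 𝓝 (planarRadius p), s ∈ R := hR.mem_nhds hpR
  have hlap {f f' f'' : ℝ → ℝ} (hf : ∀ s ∈ R, HasDerivAt f (f' s) s)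
      (hf' : ∀ s ∈ R, HasDerivAt f' (f'' s) s) :=
    laplacian_comp_planarRadius hp (hnear.mono hf) (hf' _ hpR)
  obtain ⟨hu_ode, hv_ode, hw_ode⟩ := hode _ hpR (planarRadius_pos hp)
  refine ⟨?_, ?_, ?_⟩
  · rwa [convection_comp_planarRadius α F' hp (hu _ hpR), hlap hu hu']
  · rwa [convection_comp_planarRadius α F' hp (hv _ hpR), hlap hv hv']
  · rwa [convection_comp_planarRadius α F' hp (hw _ hpR), hlap hw hw']

section InvCos

variable (β : ℝ) {t : ℝ}

lemma hasDerivAt_inv_cos_sq (hc : cos (β * t) ≠ 0) :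
    HasDerivAt (fun t => (cos (β * t))⁻¹ ^ 2)
      (2 * β * (sin (β * t) * (cos (β * t))⁻¹ ^ 3)) t := by
  have h := (((hasDerivAt_id' t).const_mul β).cos.fun_inv hc).fun_pow 2
  exact h.congr_deriv (by ring)

lemma hasDerivAt_sin_mul_inv_cos_cube (hc : cos (β * t) ≠ 0) :
    HasDerivAt (fun t => sin (β * t) * (cos (β * t))⁻¹ ^ 3)
      (β * (3 * (cos (β * t))⁻¹ ^ 4 - 2 * (cos (β * t))⁻¹ ^ 2)) t := by
  have hβt := (hasDerivAt_id' t).const_mul β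
  have h := hβt.sin.mul ((hβt.cos.fun_inv hc).fun_pow 3)
  refine h.congr_deriv ?_
  -- `ring_nf` restates the inverse from `fun_inv` (a normed-algebra lemma) with `ℝ`'s own
  -- instances, which `field_simp` needs in order to cancel it
  ring_nf
  field_simp
  linear_combination 3 * β * sin_sq_add_cos_sq (β * t)

end InvCos

theorem secant_squared_stationary_solution_general
    (β C₄ C₅ : ℝ) (F : ℝ → ℝ) :
    Solves31 (-1) 1 1 1 (deriv F)
      (fun p => 6 * β ^ 2 *
        ((Real.cos (β * Real.sqrt (p.2.1 ^ 2 + p.2.2 ^ 2)))⁻¹) ^ 2)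
      (fun p => 2 * β ^ 2 *
        (3 * ((Real.cos (β * Real.sqrt (p.2.1 ^ 2 + p.2.2 ^ 2)))⁻¹) ^ 2 - 2))
      (fun p => C₄ + C₅ * Real.sqrt (p.2.1 ^ 2 + p.2.2 ^ 2)
        - 6 * β ^ 2 * ((Real.cos (β * Real.sqrt (p.2.1 ^ 2 + p.2.2 ^ 2)))⁻¹) ^ 2)
      {p : ℝ × ℝ × ℝ | p.2 ≠ 0 ∧ Real.cos (β * Real.sqrt (p.2.1 ^ 2 + p.2.2 ^ 2)) ≠ 0} := by
  have hR : IsOpen {s : ℝ | cos (β * s) ≠ 0} := isOpen_ne_fun (by fun_prop) continuous_const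
  exact solves31_comp_planarRadius (deriv F) hR
    (u := fun s => 6 * β ^ 2 * (cos (β * s))⁻¹ ^ 2)
    (v := fun s => 2 * β ^ 2 * (3 * (cos (β * s))⁻¹ ^ 2 - 2))
    (w := fun s => C₄ + C₅ * s - 6 * β ^ 2 * (cos (β * s))⁻¹ ^ 2)
    (u' := fun s => 12 * β ^ 3 * (sin (β * s) * (cos (β * s))⁻¹ ^ 3))
    (v' := fun s => 12 * β ^ 3 * (sin (β * s) * (cos (β * s))⁻¹ ^ 3))
    (w' := fun s => C₅ - 12 * β ^ 3 * (sin (β * s) * (cos (β * s))⁻¹ ^ 3))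
    (fun s hs => ((hasDerivAt_inv_cos_sq β hs).const_mul (6 * β ^ 2)).congr_deriv (by ring))
    (fun s hs => (hasDerivAt_sin_mul_inv_cos_cube β hs).const_mul _)
    (fun s hs => ((((hasDerivAt_inv_cos_sq β hs).const_mul 3).sub_const 2).const_mul
      (2 * β ^ 2)).congr_deriv (by ring))
    (fun s hs => (hasDerivAt_sin_mul_inv_cos_cube β hs).const_mul _)
    (fun s hs => ((((hasDerivAt_id s).const_mul C₅).const_add C₄).sub
      ((hasDerivAt_inv_cos_sq β hs).const_mul (6 * β ^ 2))).congr_deriv (by ring))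
    (fun s hs => (hasDerivAt_const s C₅).sub
      ((hasDerivAt_sin_mul_inv_cos_cube β hs).const_mul _))
    (fun s _ _ => ⟨by ring, by ring, by ring⟩)

/-- Secant-squared stationary radial solution: with `r = √(x²+y²)`, the time-independent
functions `u = 6β² sec²(βr)`, `v = 2β²(3sec²(βr) − 2)`, `w = C₄ + C₅r − 6β² sec²(βr)`
solve system (3-1) with `d₁ = d₂ = d₃ = 1` and `α = −1` wherever `(x,y) ≠ (0,0)` and
`cos(βr) ≠ 0`. -/
theorem secant_squared_stationary_solution
    (β C₄ C₅ : ℝ) (hβ : β ≠ 0) (F : ℝ → ℝ) (hF : Differentiable ℝ F) :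
    Solves31 (-1) 1 1 1 (deriv F)
      (fun p => 6 * β ^ 2 *
        ((Real.cos (β * Real.sqrt (p.2.1 ^ 2 + p.2.2 ^ 2)))⁻¹) ^ 2)
      (fun p => 2 * β ^ 2 *
        (3 * ((Real.cos (β * Real.sqrt (p.2.1 ^ 2 + p.2.2 ^ 2)))⁻¹) ^ 2 - 2))
      (fun p => C₄ + C₅ * Real.sqrt (p.2.1 ^ 2 + p.2.2 ^ 2)
        - 6 * β ^ 2 * ((Real.cos (β * Real.sqrt (p.2.1 ^ 2 + p.2.2 ^ 2)))⁻¹) ^ 2)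
      {p : ℝ × ℝ × ℝ | p.2 ≠ 0 ∧ Real.cos (β * Real.sqrt (p.2.1 ^ 2 + p.2.2 ^ 2)) ≠ 0} :=
  secant_squared_stationary_solution_general β C₄ C₅ F
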